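/- Let f : 𝔻 → 𝔻 be a proper holomorphic map of degree d, 0 < δ < 1/4, and x ∈ 𝔻 a point whose hyperbolic distance to every critical point of f exceeds 32dδ. Then (1-|x|²)/(1-|f(x)|²) · |f'(x)| ≥ δ^{d-1}. -/

import Mathlib

/-!
Write `f = c N / D` with `N = ∏ (z - aᵢ)` and `D = ∏ (1 - āᵢ z)`, so that `f' = c P / D²` with
`P = N' D - N D'`. A telescoping sum gives `|D|² - |N|² = (1 - |z|²) K` with
`K(z) = ∑ᵢ (1 - |aᵢ|²) |Aᵢ(z)|²`, where `Aᵢ = ∏_{j<i} (1 - āⱼ z) ∏_{j>i} (z - aⱼ)`, and on the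
unit circle `P(z) = K(z) z^(d-1)` with `K > 0`.
By the Fejér–Riesz factorisation `P = κ ∏ⱼ (z - cⱼ)(1 - c̄ⱼ z)` with `|cⱼ| < 1`; the `cⱼ` are
critical points of `f` in the disk. The hyperbolic derivative of `f` at `x` is `|P(x)| / K(x)`,
and Cauchy–Schwarz together with the maximum principle give `K(x) ≤ κ |R(x)|²` for
`R = ∏ⱼ (1 - c̄ⱼ z)`. Hence the hyperbolic derivative is at least `∏ⱼ |x - cⱼ| / |1 - c̄ⱼ x|`,
and each factor exceeds `δ` because `cⱼ` is hyperbolically far from `x`.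
-/

open Metric

/-- The hyperbolic (Poincaré) distance on the unit disk. -/
noncomputable def diskDist (a b : ℂ) : ℝ :=
  Real.log ((1 + ‖(a - b) / (1 - (starRingEnd ℂ) b * a)‖) /
    (1 - ‖(a - b) / (1 - (starRingEnd ℂ) b * a)‖))

open Polynomial ComplexConjugate Complex

noncomputable section

theorem one_sub_conj_mul_ne_zero {w z : ℂ} (hw : ‖w‖ < 1) (hz : ‖z‖ ≤ 1) :
    1 - conj w * z ≠ 0 := by
  have hlt : ‖conj w * z‖ < 1 := by
    rw [norm_mul, RCLike.norm_conj]
    nlinarith [norm_nonneg w, norm_nonneg z]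
  intro h
  rw [← sub_eq_zero.mp h, norm_one] at hlt
  exact lt_irrefl _ hlt

theorem normSq_one_sub_conj_mul_sub_normSq_sub (w z : ℂ) :
    normSq (1 - conj w * z) - normSq (z - w) = (1 - normSq w) * (1 - normSq z) := by
  simp only [normSq_apply, sub_re, sub_im, mul_re, mul_im, one_re, one_im, conj_re, conj_im]
  ring

theorem one_sub_normSq_nonneg {w : ℂ} (hw : ‖w‖ ≤ 1) : 0 ≤ 1 - normSq w := by
  rw [normSq_eq_norm_sq, sub_nonneg]
  exact pow_le_one₀ (norm_nonneg _) hw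

theorem one_sub_normSq_pos {w : ℂ} (hw : ‖w‖ < 1) : 0 < 1 - normSq w := by
  rw [normSq_eq_norm_sq, sub_pos]
  exact pow_lt_one₀ (norm_nonneg _) hw two_ne_zero

section UnitCircle

variable {z : ℂ} (hz : ‖z‖ = 1)
include hz

theorem one_sub_conj_mul_of_norm_eq_one (w : ℂ) : 1 - conj w * z = z * conj (z - w) := by
  have hzz : z * conj z = 1 := by rw [mul_conj', hz]; norm_num
  rw [map_sub, mul_sub, hzz]
  ring

theorem normSq_one_sub_conj_mul_of_norm_eq_one (w : ℂ) :
    normSq (1 - conj w * z) = normSq (z - w) := by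
  rw [one_sub_conj_mul_of_norm_eq_one hz, normSq_mul, normSq_conj, normSq_eq_norm_sq z, hz]
  ring

theorem sub_mul_one_sub_conj_mul_of_norm_eq_one (w : ℂ) :
    (z - w) * (1 - conj w * z) = z * normSq (z - w) := by
  rw [one_sub_conj_mul_of_norm_eq_one hz, normSq_eq_conj_mul_self]
  ring

end UnitCircle

def pseudoDist (a b : ℂ) : ℝ := ‖(a - b) / (1 - conj b * a)‖

theorem diskDist_le_of_pseudoDist_le {a b : ℂ} {δ : ℝ} (h : pseudoDist a b ≤ δ)
    (hδ : δ ≤ 1 / 2) : diskDist a b ≤ 4 * δ := by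
  set t := pseudoDist a b
  have ht : 0 ≤ t := norm_nonneg _
  have hpos : 0 < (1 + t) / (1 - t) := by apply div_pos <;> linarith
  calc diskDist a b = Real.log ((1 + t) / (1 - t)) := rfl
    _ ≤ (1 + t) / (1 - t) - 1 := Real.log_le_sub_one_of_pos hpos
    _ = 2 * t / (1 - t) := by field_simp [show 1 - t ≠ 0 by linarith]; ring
    _ ≤ 4 * δ := by rw [div_le_iff₀ (by linarith)]; nlinarith

theorem lt_pseudoDist_of_four_mul_lt_diskDist {a b : ℂ} {δ : ℝ} (hδ : δ ≤ 1 / 2)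
    (h : 4 * δ < diskDist a b) : δ < pseudoDist a b :=
  not_le.mp fun h' => (diskDist_le_of_pseudoDist_le h' hδ).not_gt h

def blaschkeQuadratic (w : ℂ) : ℂ[X] := (X - C w) * (1 - C (conj w) * X)

theorem blaschkeQuadratic_zero : blaschkeQuadratic 0 = X := by
  simp [blaschkeQuadratic]

theorem blaschkeQuadratic_isRoot (w : ℂ) : (blaschkeQuadratic w).IsRoot w := by
  simp [blaschkeQuadratic]

theorem natDegree_blaschkeQuadratic_le (w : ℂ) : (blaschkeQuadratic w).natDegree ≤ 2 := by
  unfold blaschkeQuadratic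
  compute_degree

theorem blaschkeQuadratic_eq_of_ne_zero {w : ℂ} (hw : w ≠ 0) :
    blaschkeQuadratic w = C (-conj w) * ((X - C w) * (X - C (conj w)⁻¹)) := by
  have hinv : C (conj w) * C (conj w)⁻¹ = 1 := by
    rw [← C_mul, mul_inv_cancel₀ (by simpa using hw), C_1]
  simp only [blaschkeQuadratic, C_neg]
  linear_combination (C w - X) * hinv

theorem natDegree_blaschkeQuadratic {w : ℂ} (hw : w ≠ 0) :
    (blaschkeQuadratic w).natDegree = 2 := by
  rw [blaschkeQuadratic_eq_of_ne_zero hw, natDegree_C_mul (by simpa using hw),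
    natDegree_mul (X_sub_C_ne_zero _) (X_sub_C_ne_zero _), natDegree_X_sub_C, natDegree_X_sub_C]

theorem eval_blaschkeQuadratic_of_norm_eq_one {z : ℂ} (hz : ‖z‖ = 1) (w : ℂ) :
    (blaschkeQuadratic w).eval z = z * normSq (z - w) := by
  simpa [blaschkeQuadratic] using sub_mul_one_sub_conj_mul_of_norm_eq_one hz w

theorem norm_eval_blaschkeQuadratic (w x : ℂ) :
    ‖(blaschkeQuadratic w).eval x‖ = normSq (1 - conj w * x) * pseudoDist x w := by
  rw [pseudoDist, norm_div, normSq_eq_norm_sq]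
  simp only [blaschkeQuadratic, eval_mul, eval_sub, eval_X, eval_C, eval_one, norm_mul]
  rcases eq_or_ne ‖1 - conj w * x‖ 0 with h | h
  · simp [h]
  · field_simp

theorem norm_eval_blaschkeQuadratic_of_norm_eq_one {z : ℂ} (hz : ‖z‖ = 1) (w : ℂ) :
    ‖(blaschkeQuadratic w).eval z‖ = normSq (1 - conj w * z) := by
  rw [eval_blaschkeQuadratic_of_norm_eq_one hz, norm_mul, hz, one_mul, norm_real, Real.norm_eq_abs,
    abs_of_nonneg (normSq_nonneg _), normSq_one_sub_conj_mul_of_norm_eq_one hz]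

def IsSelfInversive (N : ℕ) (Q : ℂ[X]) : Prop := reflect N (Q.map conj) = Q

-- `z⁻ᵐ Q(z)` is a positive trigonometric polynomial when `Q.natDegree ≤ 2 * m`.
def PosOnCircle (m : ℕ) (Q : ℂ[X]) : Prop :=
  ∀ z : ℂ, ‖z‖ = 1 → ∃ r : ℝ, 0 < r ∧ Q.eval z = r * z ^ m

theorem eq_zero_of_forall_norm_eq_one {Q : ℂ[X]} (h : ∀ z : ℂ, ‖z‖ = 1 → Q.eval z = 0) :
    Q = 0 := by
  refine eq_zero_of_infinite_isRoot Q (Set.Infinite.mono (s := sphere 0 1)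
    (fun z hz => h z (mem_sphere_zero_iff_norm.mp hz)) ?_)
  refine (isPreconnected_sphere ?_ 0 1).infinite_of_nontrivial
    ⟨1, by simp, -1, by simp, by norm_num⟩
  rw [rank_real_complex]
  norm_num

theorem isSelfInversive_of_forall_norm_eq_one {m : ℕ} {Q : ℂ[X]} (hdeg : Q.natDegree ≤ 2 * m)
    (h : ∀ z : ℂ, ‖z‖ = 1 → ∃ r : ℝ, Q.eval z = r * z ^ m) : IsSelfInversive (2 * m) Q := by
  refine sub_eq_zero.mp (eq_zero_of_forall_norm_eq_one fun z hz => ?_)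
  obtain ⟨r, hr⟩ := h z hz
  have hzz : z * conj z = 1 := by rw [mul_conj', hz]; norm_num
  have hz' : conj z ≠ 0 := right_ne_zero_of_mul_eq_one hzz
  let := invertibleOfNonzero hz'
  have hrefl := eval₂_reflect_mul_pow (RingHom.id ℂ) (conj z) (2 * m) (Q.map conj)
    (by rwa [natDegree_map])
  rw [invOf_eq_inv, inv_eq_of_mul_eq_one_left hzz] at hrefl
  change eval z _ * _ = eval (conj z) (Q.map conj) at hrefl
  rw [eval_map, eval₂_at_apply, hr] at hrefl
  rw [eval_sub, hr, sub_eq_zero]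
  refine mul_right_cancel₀ (pow_ne_zero (2 * m) hz') (hrefl.trans ?_)
  rw [map_mul, map_pow, conj_ofReal, two_mul, pow_add, ← mul_assoc, mul_assoc _ (z ^ m),
    ← mul_pow, hzz, one_pow, mul_one]

namespace IsSelfInversive

variable {N : ℕ} {Q : ℂ[X]} (hQ : IsSelfInversive N Q)
include hQ

theorem coeff_eq_conj_coeff_zero : Q.coeff N = conj (Q.coeff 0) := by
  nth_rewrite 1 [← hQ]
  rw [coeff_reflect, revAt_le le_rfl, Nat.sub_self, coeff_map]

theorem isRoot_inv_conj_iff (hdeg : Q.natDegree ≤ N) {c : ℂ} (hc : c ≠ 0) :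
    Q.IsRoot (conj c)⁻¹ ↔ Q.IsRoot c := by
  let := invertibleOfNonzero ((_root_.map_ne_zero conj).mpr hc)
  have hrefl := eval₂_reflect_eq_zero_iff (RingHom.id ℂ) (conj c) N (Q.map conj)
    (by rwa [natDegree_map])
  rw [invOf_eq_inv, hQ] at hrefl
  change eval _ Q = 0 ↔ eval (conj c) (Q.map conj) = 0 at hrefl
  rw [eval_map, eval₂_at_apply, map_eq_zero] at hrefl
  exact hrefl

end IsSelfInversive

namespace PosOnCircle

variable {m : ℕ} {Q : ℂ[X]} (hQ : PosOnCircle m Q)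
include hQ

theorem eval_ne_zero {z : ℂ} (hz : ‖z‖ = 1) : Q.eval z ≠ 0 := by
  obtain ⟨r, hr, hQz⟩ := hQ z hz
  rw [hQz]
  exact mul_ne_zero (ofReal_ne_zero.mpr hr.ne') (pow_ne_zero _ (norm_ne_zero_iff.mp (by simp [hz])))

theorem ne_zero : Q ≠ 0 := by
  rintro rfl
  exact hQ.eval_ne_zero (z := 1) (by simp) eval_zero

theorem isSelfInversive (hdeg : Q.natDegree ≤ 2 * m) : IsSelfInversive (2 * m) Q :=
  isSelfInversive_of_forall_norm_eq_one hdeg fun z hz => (hQ z hz).imp fun _ hr => hr.2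

end PosOnCircle

theorem PosOnCircle.of_blaschkeQuadratic_mul {m : ℕ} {c : ℂ} {Q : ℂ[X]}
    (hQ : PosOnCircle (m + 1) (blaschkeQuadratic c * Q)) (hc : ‖c‖ < 1) : PosOnCircle m Q := by
  intro z hz
  obtain ⟨r, hr, hQz⟩ := hQ z hz
  have hz0 : z ≠ 0 := norm_ne_zero_iff.mp (by simp [hz])
  have hzc : 0 < normSq (z - c) :=
    normSq_pos.mpr (sub_ne_zero.mpr fun h => (h ▸ hc).ne hz)
  have hzc' : (normSq (z - c) : ℂ) ≠ 0 := ofReal_ne_zero.mpr hzc.ne'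
  refine ⟨r / normSq (z - c), div_pos hr hzc, mul_left_cancel₀ (mul_ne_zero hz0 hzc') ?_⟩
  rw [eval_mul, eval_blaschkeQuadratic_of_norm_eq_one hz, pow_succ] at hQz
  rw [hQz, ofReal_div]
  field_simp

theorem blaschkeQuadratic_dvd {c : ℂ} {Q : ℂ[X]} (hc0 : c ≠ 0) (hc1 : ‖c‖ ≠ 1) (h : Q.IsRoot c)
    (h' : Q.IsRoot (conj c)⁻¹) : blaschkeQuadratic c ∣ Q := by
  have hunit : IsUnit (C (-conj c)) := isUnit_C.mpr (by simpa using hc0)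
  rw [blaschkeQuadratic_eq_of_ne_zero hc0, hunit.mul_left_dvd]
  obtain ⟨S, rfl⟩ := dvd_iff_isRoot.mpr h
  have hne : (conj c)⁻¹ - c ≠ 0 := by
    refine sub_ne_zero.mpr fun hcc => hc1 ?_
    have hnorm := congrArg norm hcc
    rw [norm_inv, RCLike.norm_conj] at hnorm
    have hpos : 0 < ‖c‖ := norm_pos_iff.mpr hc0
    field_simp at hnorm
    nlinarith
  have hS : S.IsRoot (conj c)⁻¹ := by
    simpa [IsRoot, hne] using h'
  exact mul_dvd_mul_left _ (dvd_iff_isRoot.mpr hS)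

theorem PosOnCircle.exists_isRoot_ne_zero_norm_lt_one {m : ℕ} {Q : ℂ[X]}
    (hQ : PosOnCircle m Q) (hdeg : Q.natDegree ≤ 2 * m) (hm : 0 < m) (h0 : Q.coeff 0 ≠ 0) :
    ∃ c : ℂ, ‖c‖ < 1 ∧ c ≠ 0 ∧ Q.IsRoot c := by
  have hself := hQ.isSelfInversive hdeg
  have htop : 2 * m ≤ Q.natDegree :=
    le_natDegree_of_ne_zero (by rwa [hself.coeff_eq_conj_coeff_zero, _root_.map_ne_zero])
  obtain ⟨z, hz⟩ := Complex.exists_root (f := Q) (by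
    rw [degree_eq_natDegree hQ.ne_zero]
    norm_cast
    omega)
  have hz0 : z ≠ 0 := by
    rintro rfl
    exact h0 (by rwa [coeff_zero_eq_eval_zero])
  have hz1 : ‖z‖ ≠ 1 := fun h => hQ.eval_ne_zero h hz
  rcases hz1.lt_or_gt with hlt | hgt
  · exact ⟨z, hlt, hz0, hz⟩
  · refine ⟨(conj z)⁻¹, ?_, by simpa using hz0, (hself.isRoot_inv_conj_iff hdeg hz0).mpr hz⟩
    rw [norm_inv, RCLike.norm_conj]
    exact inv_lt_one_of_one_lt₀ hgt

theorem PosOnCircle.exists_eq_blaschkeQuadratic_mul {m : ℕ} {Q : ℂ[X]}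
    (hQ : PosOnCircle (m + 1) Q) (hdeg : Q.natDegree ≤ 2 * (m + 1)) :
    ∃ c Q₁, ‖c‖ < 1 ∧ Q₁.natDegree ≤ 2 * m ∧ Q = blaschkeQuadratic c * Q₁ := by
  have hself := hQ.isSelfInversive hdeg
  by_cases h0 : Q.coeff 0 = 0
  · obtain ⟨Q₁, rfl⟩ := X_dvd_iff.mpr h0
    have hQ₁ : Q₁ ≠ 0 := right_ne_zero_of_mul hQ.ne_zero
    have htop : (X * Q₁).natDegree ≠ 2 * (m + 1) := fun h => by
      have hlead := hself.coeff_eq_conj_coeff_zero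
      rw [h0, map_zero, ← h] at hlead
      exact hQ.ne_zero (leadingCoeff_eq_zero.mp hlead)
    refine ⟨0, Q₁, by simp, ?_, by rw [blaschkeQuadratic_zero]⟩
    rw [natDegree_X_mul hQ₁] at hdeg htop
    omega
  · obtain ⟨c, hc, hc0, hroot⟩ := hQ.exists_isRoot_ne_zero_norm_lt_one hdeg m.succ_pos h0
    obtain ⟨Q₁, rfl⟩ := blaschkeQuadratic_dvd hc0 hc.ne hroot
      ((hself.isRoot_inv_conj_iff hdeg hc0).mpr hroot)
    refine ⟨c, Q₁, hc, ?_, rfl⟩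
    rw [natDegree_mul (left_ne_zero_of_mul hQ.ne_zero) (right_ne_zero_of_mul hQ.ne_zero),
      natDegree_blaschkeQuadratic hc0] at hdeg
    omega

-- The Fejér–Riesz factorisation.
theorem PosOnCircle.exists_eq_C_mul_prod_blaschkeQuadratic {m : ℕ} {Q : ℂ[X]}
    (hQ : PosOnCircle m Q) (hdeg : Q.natDegree ≤ 2 * m) :
    ∃ κ : ℝ, 0 < κ ∧ ∃ c : Fin m → ℂ, (∀ j, ‖c j‖ < 1) ∧
      Q = C (κ : ℂ) * ∏ j, blaschkeQuadratic (c j) := by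
  induction m generalizing Q with
  | zero =>
    obtain ⟨r, hr, hQ1⟩ := hQ 1 (by simp)
    refine ⟨r, hr, Fin.elim0, fun j => j.elim0, ?_⟩
    have hC := eq_C_of_natDegree_le_zero hdeg
    rw [hC, eval_C, pow_zero, mul_one] at hQ1
    rw [hC, hQ1, Finset.univ_eq_empty, Finset.prod_empty, mul_one]
  | succ m ih =>
    obtain ⟨c, Q₁, hc, hdeg₁, rfl⟩ := hQ.exists_eq_blaschkeQuadratic_mul hdeg
    obtain ⟨κ, hκ, cs, hcs, rfl⟩ := ih (hQ.of_blaschkeQuadratic_mul hc) hdeg₁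
    refine ⟨κ, hκ, Fin.cons c cs, Fin.cases hc hcs, ?_⟩
    rw [Fin.prod_univ_succ, Fin.cons_zero]
    simp only [Fin.cons_succ]
    ring

theorem prod_erase_eq_prod_filter_lt_mul_prod_filter_gt {ι M : Type*} [LinearOrder ι]
    [CommMonoid M] (s : Finset ι) (f : ι → M) (i : ι) :
    ∏ j ∈ s.erase i, f j = (∏ j ∈ s with j < i, f j) * ∏ j ∈ s with i < j, f j := by
  rw [← Finset.prod_filter_mul_prod_filter_not (s.erase i) (· < i)]
  congr 2 <;> ext j <;> simp only [Finset.mem_filter, Finset.mem_erase] <;> grind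

theorem norm_sum_mul_conj_mul_sq_le {ι : Type*} (s : Finset ι) {w : ι → ℝ}
    (hw : ∀ i ∈ s, 0 ≤ w i) (u v : ι → ℂ) :
    ‖∑ i ∈ s, w i * (conj (u i) * v i)‖ ^ 2 ≤
      (∑ i ∈ s, w i * normSq (u i)) * ∑ i ∈ s, w i * normSq (v i) := by
  have hterm : ∀ i ∈ s, ‖(w i : ℂ) * (conj (u i) * v i)‖ = w i * (‖u i‖ * ‖v i‖) := fun i hi => by
    rw [norm_mul, norm_mul, RCLike.norm_conj, norm_real, Real.norm_of_nonneg (hw i hi)]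
  calc ‖∑ i ∈ s, w i * (conj (u i) * v i)‖ ^ 2 ≤ (∑ i ∈ s, w i * (‖u i‖ * ‖v i‖)) ^ 2 := by
        gcongr
        exact (norm_sum_le _ _).trans (Finset.sum_congr rfl hterm).le
    _ ≤ _ := Finset.sum_sq_le_sum_mul_sum_of_sq_le_mul s
        (fun i hi => mul_nonneg (hw i hi) (normSq_nonneg _))
        (fun i hi => mul_nonneg (hw i hi) (normSq_nonneg _))
        fun i _ => le_of_eq (by rw [normSq_eq_norm_sq, normSq_eq_norm_sq]; ring)

theorem norm_le_mul_norm_of_forall_norm_eq_one {G R : ℂ → ℂ} (hG : Differentiable ℂ G)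
    (hR : Differentiable ℂ R) (hR0 : ∀ z, ‖z‖ ≤ 1 → R z ≠ 0) {M : ℝ}
    (h : ∀ z, ‖z‖ = 1 → ‖G z‖ ≤ M * ‖R z‖) {x : ℂ} (hx : ‖x‖ ≤ 1) : ‖G x‖ ≤ M * ‖R x‖ := by
  have hdiff : DiffContOnCl ℂ (fun z => G z / R z) (ball 0 1) := by
    refine DifferentiableOn.diffContOnCl ?_
    rw [closure_ball 0 one_ne_zero]
    exact hG.differentiableOn.div hR.differentiableOn
      fun z hz => hR0 z (mem_closedBall_zero_iff.mp hz)
  have hmax := Complex.norm_le_of_forall_mem_frontier_norm_le isBounded_ball hdiff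
    (C := M) (fun z hz => ?_) (z := x)
    (by rwa [closure_ball 0 one_ne_zero, mem_closedBall_zero_iff])
  · rwa [norm_div, div_le_iff₀ (norm_pos_iff.mpr (hR0 x hx))] at hmax
  · rw [frontier_ball 0 one_ne_zero, mem_sphere_zero_iff_norm] at hz
    rw [norm_div, div_le_iff₀ (norm_pos_iff.mpr (hR0 z hz.le))]
    exact h z hz

section BlaschkeProduct

variable {ι : Type*} [Fintype ι] (b : ι → ℂ)

def blaschkeNum : ℂ[X] := ∏ i, (X - C (b i))

def blaschkeDen : ℂ[X] := ∏ i, (1 - C (conj (b i)) * X)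

theorem eval_blaschkeDen_ne_zero {b : ι → ℂ} (hb : ∀ i, ‖b i‖ < 1) {z : ℂ} (hz : ‖z‖ ≤ 1) :
    (blaschkeDen b).eval z ≠ 0 := by
  simpa [blaschkeDen, eval_prod, Finset.prod_ne_zero_iff] using
    fun i => one_sub_conj_mul_ne_zero (hb i) hz

theorem blaschke_eq_eval_div_eval :
    (fun z => ∏ i, (z - b i) / (1 - conj (b i) * z)) =
      fun z => (blaschkeNum b).eval z / (blaschkeDen b).eval z := by
  ext z
  simp [blaschkeNum, blaschkeDen, eval_prod, Finset.prod_div_distrib]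

theorem norm_eval_prod_blaschkeQuadratic (x : ℂ) :
    ‖(∏ i, blaschkeQuadratic (b i)).eval x‖ =
      normSq ((blaschkeDen b).eval x) * ∏ i, pseudoDist x (b i) := by
  simp [blaschkeDen, eval_prod, norm_prod, norm_eval_blaschkeQuadratic, Finset.prod_mul_distrib]

variable [DecidableEq ι]

def critPoly : ℂ[X] :=
  ∑ i, C (1 - normSq (b i) : ℂ) * ∏ j ∈ Finset.univ.erase i, blaschkeQuadratic (b j)

theorem derivative_blaschkeNum_mul_sub :
    derivative (blaschkeNum b) * blaschkeDen b - blaschkeNum b * derivative (blaschkeDen b) =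
      critPoly b := by
  simp only [blaschkeNum, blaschkeDen, critPoly, derivative_prod_finset, Finset.sum_mul,
    Finset.mul_sum, ← Finset.sum_sub_distrib]
  refine Finset.sum_congr rfl fun i _ => ?_
  rw [← Finset.mul_prod_erase _ (fun j => X - C (b j)) (Finset.mem_univ i),
    ← Finset.mul_prod_erase _ (fun j => 1 - C (conj (b j)) * X) (Finset.mem_univ i)]
  simp only [blaschkeQuadratic, Finset.prod_mul_distrib, map_sub, map_one, normSq_eq_conj_mul_self,
    C_mul, derivative_X, derivative_C, derivative_one, derivative_mul]
  ring

theorem hasDerivAt_blaschke {z : ℂ} (hz : (blaschkeDen b).eval z ≠ 0) :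
    HasDerivAt (fun z => ∏ i, (z - b i) / (1 - conj (b i) * z))
      ((critPoly b).eval z / (blaschkeDen b).eval z ^ 2) z := by
  rw [blaschke_eq_eval_div_eval, ← derivative_blaschkeNum_mul_sub]
  rw [eval_sub, eval_mul, eval_mul]
  exact ((blaschkeNum b).hasDerivAt z).div ((blaschkeDen b).hasDerivAt z) hz

theorem deriv_blaschke_eq_zero {b : ι → ℂ} (hb : ∀ i, ‖b i‖ < 1) (c : ℂ) {z : ℂ} (hz : ‖z‖ ≤ 1)
    (hroot : (critPoly b).IsRoot z) :
    deriv (fun z => c * ∏ i, (z - b i) / (1 - conj (b i) * z)) z = 0 := by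
  rw [((hasDerivAt_blaschke b (eval_blaschkeDen_ne_zero hb hz)).const_mul c).deriv, hroot.eq_zero,
    zero_div, mul_zero]

theorem natDegree_critPoly_le : (critPoly b).natDegree ≤ 2 * (Fintype.card ι - 1) := by
  refine natDegree_sum_le_of_forall_le _ _ fun i _ => (natDegree_C_mul_le _ _).trans ?_
  refine (natDegree_prod_le _ _).trans ((Finset.sum_le_sum fun j _ =>
    natDegree_blaschkeQuadratic_le (b j)).trans ?_)
  simp [Finset.card_erase_of_mem, mul_comm]

end BlaschkeProduct

section Kernel

variable {ι : Type*} [Fintype ι] [LinearOrder ι] (b : ι → ℂ)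

def mixedProd (i : ι) : ℂ[X] :=
  (∏ j with j < i, (1 - C (conj (b j)) * X)) * ∏ j with i < j, (X - C (b j))

-- A sum of squares equal to `(|D(z)|² - |N(z)|²) / (1 - |z|²)`, the diagonal of the
-- reproducing kernel of the Blaschke product.
def kernelDiag (z : ℂ) : ℝ := ∑ i, (1 - normSq (b i)) * normSq ((mixedProd b i).eval z)

theorem normSq_eval_mixedProd_of_norm_eq_one {z : ℂ} (hz : ‖z‖ = 1) (i : ι) :
    normSq ((mixedProd b i).eval z) = ∏ j ∈ Finset.univ.erase i, normSq (z - b j) := by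
  simp only [mixedProd, eval_mul, eval_prod, eval_sub, eval_one, eval_C, eval_X, map_mul, map_prod,
    normSq_one_sub_conj_mul_of_norm_eq_one hz, prod_erase_eq_prod_filter_lt_mul_prod_filter_gt]

theorem critPoly_eval_of_norm_eq_one {z : ℂ} (hz : ‖z‖ = 1) :
    (critPoly b).eval z = kernelDiag b z * z ^ (Fintype.card ι - 1) := by
  simp only [critPoly, kernelDiag, eval_finsetSum, eval_mul, eval_C, eval_prod,
    eval_blaschkeQuadratic_of_norm_eq_one hz, Finset.prod_mul_distrib, Finset.prod_const,
    normSq_eval_mixedProd_of_norm_eq_one b hz, ofReal_sum, ofReal_mul, ofReal_prod, Finset.sum_mul]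
  refine Finset.sum_congr rfl fun i _ => ?_
  rw [Finset.card_erase_of_mem (Finset.mem_univ i), Finset.card_univ]
  push_cast
  ring

theorem kernelDiag_pos [Nonempty ι] {b : ι → ℂ} (hb : ∀ i, ‖b i‖ < 1) {z : ℂ} (hz : ‖z‖ ≤ 1) :
    0 < kernelDiag b z := by
  obtain ⟨i, -, hi⟩ := Finset.univ.exists_max_image id (Finset.univ_nonempty (α := ι))
  refine Finset.sum_pos' (fun j _ => mul_nonneg (one_sub_normSq_pos (hb j)).le (normSq_nonneg _))
    ⟨i, Finset.mem_univ i, mul_pos (one_sub_normSq_pos (hb i)) (normSq_pos.mpr ?_)⟩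
  rw [mixedProd, Finset.filter_false_of_mem (s := Finset.univ) (p := fun j => i < j)
    fun j _ => not_lt.mpr (hi j (Finset.mem_univ j))]
  simpa [eval_prod, Finset.prod_ne_zero_iff] using fun j _ => one_sub_conj_mul_ne_zero (hb j) hz

theorem posOnCircle_critPoly [Nonempty ι] {b : ι → ℂ} (hb : ∀ i, ‖b i‖ < 1) :
    PosOnCircle (Fintype.card ι - 1) (critPoly b) := fun z hz =>
  ⟨kernelDiag b z, kernelDiag_pos hb hz.le, critPoly_eval_of_norm_eq_one b hz⟩

theorem normSq_eval_blaschkeDen_sub_normSq_eval_blaschkeNum (z : ℂ) :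
    normSq ((blaschkeDen b).eval z) - normSq ((blaschkeNum b).eval z) =
      (1 - normSq z) * kernelDiag b z := by
  -- `prod_add_ordered` for `v = u + (v - u)` telescopes `∏ v - ∏ u`.
  have htel := Finset.prod_add_ordered Finset.univ (fun i => normSq (z - b i))
    (fun i => normSq (1 - conj (b i) * z) - normSq (z - b i))
  simp only [add_sub_cancel] at htel
  simp only [normSq_one_sub_conj_mul_sub_normSq_sub] at htel
  simp only [blaschkeDen, blaschkeNum, kernelDiag, mixedProd, eval_prod, eval_mul, eval_sub,
    eval_one, eval_C, eval_X, map_prod, map_mul, htel, add_sub_cancel_left, Finset.mul_sum]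
  exact Finset.sum_congr rfl fun i _ => by ring

end Kernel

section KernelBound

variable {ι : Type*} [Fintype ι] [LinearOrder ι] {b : ι → ℂ}

theorem kernelDiag_nonneg (hb : ∀ i, ‖b i‖ ≤ 1) (z : ℂ) : 0 ≤ kernelDiag b z :=
  Finset.sum_nonneg fun i _ => mul_nonneg (one_sub_normSq_nonneg (hb i)) (normSq_nonneg _)

theorem kernelDiag_le_of_critPoly_eq (hb : ∀ i, ‖b i‖ ≤ 1) {ι' : Type*} [Fintype ι'] {c : ι' → ℂ}
    (hc : ∀ j, ‖c j‖ < 1) {κ : ℝ} (hκ : 0 ≤ κ)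
    (hP : critPoly b = C (κ : ℂ) * ∏ j, blaschkeQuadratic (c j)) {x : ℂ} (hx : ‖x‖ ≤ 1) :
    kernelDiag b x ≤ κ * normSq ((blaschkeDen c).eval x) := by
  set K := kernelDiag b
  have hK : ∀ z, 0 ≤ K z := kernelDiag_nonneg hb
  have hcircle : ∀ z, ‖z‖ = 1 → K z = κ * normSq ((blaschkeDen c).eval z) := fun z hz => by
    have h := congrArg norm (critPoly_eval_of_norm_eq_one b hz)
    rw [hP, norm_mul, norm_pow, hz, one_pow, mul_one, norm_real, Real.norm_of_nonneg (hK z),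
      eval_mul, eval_C, eval_prod, norm_mul, norm_prod, norm_real, Real.norm_of_nonneg hκ] at h
    simp only [norm_eval_blaschkeQuadratic_of_norm_eq_one hz] at h
    simpa [blaschkeDen, eval_prod, map_prod] using h.symm
  -- `|G|² ≤ K x * K = K x * κ |R|²` on the circle by Cauchy–Schwarz, and `G x = K x`;
  -- the maximum principle for `G / R` then bounds `K x` by `√(K x * κ) |R x|`.
  let G := fun z => ∑ i, ((1 - normSq (b i) : ℝ) : ℂ) *
    (conj ((mixedProd b i).eval x) * (mixedProd b i).eval z)
  have hGx : G x = K x := by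
    simp [G, K, kernelDiag, normSq_eq_conj_mul_self]
  have hG : ∀ z, ‖z‖ = 1 → ‖G z‖ ≤ √(K x * κ) * ‖(blaschkeDen c).eval z‖ := fun z hz => by
    have hcs := norm_sum_mul_conj_mul_sq_le Finset.univ (fun i _ => one_sub_normSq_nonneg (hb i))
      (fun i => (mixedProd b i).eval x) (fun i => (mixedProd b i).eval z)
    change ‖G z‖ ^ 2 ≤ K x * K z at hcs
    rw [hcircle z hz, normSq_eq_norm_sq] at hcs
    rw [← Real.sqrt_sq (norm_nonneg (G z)), ← Real.sqrt_sq (norm_nonneg ((blaschkeDen c).eval z)),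
      ← Real.sqrt_mul (mul_nonneg (hK x) hκ)]
    exact Real.sqrt_le_sqrt (by linarith)
  have hmax := norm_le_mul_norm_of_forall_norm_eq_one (by fun_prop) (blaschkeDen c).differentiable
    (fun z hz => eval_blaschkeDen_ne_zero hc hz) hG hx
  rw [hGx, norm_real, Real.norm_of_nonneg (hK x)] at hmax
  rcases (hK x).eq_or_lt with h0 | hpos
  · rw [← h0]
    exact mul_nonneg hκ (normSq_nonneg _)
  · have hsq := pow_le_pow_left₀ (hK x) hmax 2
    rw [mul_pow, Real.sq_sqrt (mul_nonneg (hK x) hκ), ← normSq_eq_norm_sq] at hsq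
    exact le_of_mul_le_mul_left (by linarith) hpos

theorem prod_pseudoDist_le_of_critPoly_eq [Nonempty ι] (hb : ∀ i, ‖b i‖ < 1) {ι' : Type*}
    [Fintype ι'] {c : ι' → ℂ} (hc : ∀ j, ‖c j‖ < 1) {κ : ℝ} (hκ : 0 < κ)
    (hP : critPoly b = C (κ : ℂ) * ∏ j, blaschkeQuadratic (c j)) {x : ℂ} (hx : ‖x‖ ≤ 1) :
    ∏ j, pseudoDist x (c j) ≤ ‖(critPoly b).eval x‖ / kernelDiag b x := by
  have hR : 0 < normSq ((blaschkeDen c).eval x) := normSq_pos.mpr (eval_blaschkeDen_ne_zero hc hx)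
  calc ∏ j, pseudoDist x (c j) = ‖(critPoly b).eval x‖ / (κ * normSq ((blaschkeDen c).eval x)) := by
        rw [hP, eval_mul, eval_C, norm_mul, norm_real, Real.norm_of_nonneg hκ.le,
          norm_eval_prod_blaschkeQuadratic]
        field_simp
    _ ≤ ‖(critPoly b).eval x‖ / kernelDiag b x :=
        div_le_div_of_nonneg_left (norm_nonneg _) (kernelDiag_pos hb hx)
          (kernelDiag_le_of_critPoly_eq (fun i => (hb i).le) hc hκ.le hP hx)

end KernelBound

theorem hyperbolicDeriv_blaschke_eq {ι : Type*} [Fintype ι] [LinearOrder ι] {b : ι → ℂ}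
    (hb : ∀ i, ‖b i‖ < 1) {c : ℂ} (hc : ‖c‖ = 1) {x : ℂ} (hx : ‖x‖ < 1) :
    (1 - ‖x‖ ^ 2) / (1 - ‖c * ∏ i, (x - b i) / (1 - conj (b i) * x)‖ ^ 2) *
        ‖deriv (fun z => c * ∏ i, (z - b i) / (1 - conj (b i) * z)) x‖ =
      ‖(critPoly b).eval x‖ / kernelDiag b x := by
  have hD := eval_blaschkeDen_ne_zero hb hx.le
  have hfx : ∏ i, (x - b i) / (1 - conj (b i) * x) =
      (blaschkeNum b).eval x / (blaschkeDen b).eval x := congrFun (blaschke_eq_eval_div_eval b) x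
  have hdiff := normSq_eval_blaschkeDen_sub_normSq_eval_blaschkeNum b x
  rw [((hasDerivAt_blaschke b hD).const_mul c).deriv, hfx]
  simp only [norm_mul, hc, one_mul, norm_div, norm_pow, normSq_eq_norm_sq] at hdiff ⊢
  have hD' : 0 < ‖(blaschkeDen b).eval x‖ := norm_pos_iff.mpr hD
  have hx' : 0 < 1 - ‖x‖ ^ 2 := by nlinarith [norm_nonneg x]
  have h1 : 1 - (‖(blaschkeNum b).eval x‖ / ‖(blaschkeDen b).eval x‖) ^ 2 =
      (1 - ‖x‖ ^ 2) * kernelDiag b x / ‖(blaschkeDen b).eval x‖ ^ 2 := by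
    rw [← hdiff]
    field_simp
  rw [h1]
  rcases eq_or_ne (kernelDiag b x) 0 with h | h
  · simp [h]
  · field_simp

end

/-- If `x ∈ 𝔻` has hyperbolic distance greater than `32dδ` (with `0 < δ < 1/4`)
to every critical point of a degree-`d` Blaschke product `f`, then the
hyperbolic derivative of `f` at `x` is at least `δ^(d-1)`. -/
theorem derivative_lower_bound_away_from_critical (d : ℕ) (hd : 1 ≤ d)
    (a : Fin d → ℂ) (ha : ∀ i, ‖a i‖ < 1)
    (c : ℂ) (hc : ‖c‖ = 1) (f : ℂ → ℂ)
    (hf : f = fun z => c * ∏ i, (z - a i) / (1 - (starRingEnd ℂ) (a i) * z))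
    (δ : ℝ) (hδ0 : 0 < δ) (hδ : δ < 1 / 4)
    (x : ℂ) (hx : x ∈ ball (0 : ℂ) 1)
    (hfar : ∀ z ∈ ball (0 : ℂ) 1, deriv f z = 0 → 32 * d * δ < diskDist x z) :
    δ ^ (d - 1) ≤ (1 - ‖x‖ ^ 2) / (1 - ‖f x‖ ^ 2)
        * ‖deriv f x‖ := by
  subst hf
  have hx1 : ‖x‖ < 1 := mem_ball_zero_iff.mp hx
  have : Nonempty (Fin d) := ⟨⟨0, hd⟩⟩
  obtain ⟨κ, hκ, cp, hcp, hP⟩ :=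
    (posOnCircle_critPoly ha).exists_eq_C_mul_prod_blaschkeQuadratic (natDegree_critPoly_le a)
  have hcrit : ∀ j, δ < pseudoDist x (cp j) := fun j => by
    have hroot : (critPoly a).IsRoot (cp j) := by
      rw [hP]
      exact eval_eq_zero_of_dvd_of_eval_eq_zero
        ((Finset.dvd_prod_of_mem _ (Finset.mem_univ j)).mul_left _) (blaschkeQuadratic_isRoot _)
    refine lt_pseudoDist_of_four_mul_lt_diskDist (by linarith) (lt_of_le_of_lt ?_
      (hfar _ (mem_ball_zero_iff.mpr (hcp j)) (deriv_blaschke_eq_zero ha c (hcp j).le hroot)))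
    have hd' : (1 : ℝ) ≤ d := by exact_mod_cast hd
    nlinarith
  rw [hyperbolicDeriv_blaschke_eq ha hc hx1]
  calc δ ^ (d - 1) ≤ ∏ j, pseudoDist x (cp j) := by
        simpa using Finset.prod_le_prod (s := .univ) (fun _ _ => hδ0.le) fun j _ => (hcrit j).le
    _ ≤ _ := prod_pseudoDist_le_of_critPoly_eq ha hcp hκ hP hx1.le
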